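/- For the Dirac-type operator D = Σ_{j,μ} (σ^j e_j^μ δ_μ + ½σ^j δ_μ(e_j^μ)) on the noncommutative torus with invertible coefficient matrix (e_j^μ) over J A_θ J*, the one-forms ω_i = U_i* [D, U_i] are central: [a, ω_i] = 0 for all a ∈ A_θ. -/

import Mathlib

/- STATEMENT 8: For the Dirac-type operator
  D = Σ_{j,μ} (σ^j e_j^μ δ_μ + ½ σ^j δ_μ(e_j^μ))
on the noncommutative torus, with coefficients e_j^μ in the commutant J A_θ J*,
the one-forms ω_i = U_i* [D, U_i] are central: [π(a), ω_i] = 0 for all a ∈ A_θ.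

Model: V = (ℤ×ℤ → ℂ) is the GNS space of A_θ with basis ε_{k,l};
the monomial π(U₁^kU₂^l) is the operator `wA θ (k,l)` and a general a ∈ A_θ is
π(a) = Σ α_p wA θ p (finitely many terms).  The spinor space is H = V × V, A_θ
acting diagonally; σ¹,σ²,σ³ act on the ℂ² factor.  δ₁, δ₂ are the diagonal
operators implementing the derivations, δ_μ(T) := [δ_μ, T], and the coefficients
e_j^μ are arbitrary operators commuting with every π(U₁^kU₂^l), i.e. elements of
the commutant of A_θ. -/

noncomputable section
open Complex

abbrev NCV := (ℤ × ℤ) → ℂ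

/-- the operator `π(U₁^k U₂^l)` on the GNS space -/
def wA (θ : ℝ) (p : ℤ × ℤ) : Module.End ℂ NCV where
  toFun f := fun q =>
    Complex.exp (2 * Real.pi * Complex.I * θ * (q.1 - p.1) * p.2) * f (q.1 - p.1, q.2 - p.2)
  map_add' f g := by funext q; simp [mul_add]
  map_smul' c f := by funext q; simp [smul_eq_mul]; ring

/-- the derivations δ₁, δ₂, acting diagonally on the GNS space -/
def ncDer (μ : Fin 2) : Module.End ℂ NCV where
  toFun f := fun q => (if μ = 0 then (q.1 : ℂ) else (q.2 : ℂ)) * f q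
  map_add' f g := by funext q; simp [mul_add]
  map_smul' c f := by funext q; simp [smul_eq_mul]; ring

/-- π(a) for a = Σ α_p U₁^{p₁}U₂^{p₂} ∈ A_θ (finitely supported coefficients) -/
def ncRep (θ : ℝ) (α : (ℤ × ℤ) →₀ ℂ) : Module.End ℂ NCV :=
  α.sum fun p c => c • wA θ p

/-- diagonal lift of an operator on V to the spinor space H = V ⊗ ℂ² = V × V -/
def ncDiag (T : Module.End ℂ NCV) : Module.End ℂ (NCV × NCV) := T.prodMap T

/-- the action of the Pauli matrices σ¹, σ² on H = V × V -/
def ncSigma (j : Fin 2) : Module.End ℂ (NCV × NCV) where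
  toFun x := if j = 0 then (x.2, x.1) else (-(Complex.I • x.2), Complex.I • x.1)
  map_add' x y := by
    rcases x with ⟨x1, x2⟩; rcases y with ⟨y1, y2⟩
    by_cases h : j = 0 <;> simp [h, Prod.add_def, smul_add] <;> abel
  map_smul' c x := by
    by_cases h : j = 0 <;> simp [h, Prod.smul_def, smul_comm c] <;> abel

/-- the Dirac-type operator D = Σ_{j,μ} (σ^j e_j^μ δ_μ + ½ σ^j δ_μ(e_j^μ)),
with δ_μ(e) = [δ_μ, e] -/
def ncDirac (E : Fin 2 → Fin 2 → Module.End ℂ NCV) : Module.End ℂ (NCV × NCV) :=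
  ∑ j : Fin 2, ∑ μ : Fin 2,
    (ncSigma j * ncDiag (E j μ * ncDer μ) +
      (1 / 2 : ℂ) • (ncSigma j * ncDiag (ncDer μ * E j μ - E j μ * ncDer μ)))

/-- ω_i = π(U_i)* [D, π(U_i)] (diagonal action of U_i on spinors);
`U_i* = U_i⁻¹` is the monomial with exponent `-gen i` -/
def ncOmega (θ : ℝ) (E : Fin 2 → Fin 2 → Module.End ℂ NCV) (i : Fin 2) :
    Module.End ℂ (NCV × NCV) :=
  let g : ℤ × ℤ := if i = 0 then (1, 0) else (0, 1)
  ncDiag (wA θ (-g)) *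
    (ncDirac E * ncDiag (wA θ g) - ncDiag (wA θ g) * ncDirac E)

/-! Conjugating by `U_g` shifts the derivations by scalars, `[δ_μ, U_g] = g_μ U_g`, while the
coefficients `e_j^μ` and the Pauli matrices commute with `U_g`. Hence
`[D, U_g] = Σ g_μ U_g σ^j e_j^μ` (the `½ σ^j δ_μ(e_j^μ)` terms contribute nothing), and since
`U_{-g} U_g` is a scalar, `U_{-g}[D, U_g]` is a combination of the `σ^j e_j^μ`. Each of these
commutes with the diagonal action of `A_θ`: `σ^j` acts on the spinor factor only and `e_j^μ` lies
in the commutant. -/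

def ncDiagAlgHom : Module.End ℂ NCV →ₐ[ℂ] Module.End ℂ (NCV × NCV) :=
  (LinearMap.prodMapAlgHom ℂ NCV NCV).comp ((AlgHom.id ℂ _).prod (AlgHom.id ℂ _))

theorem ncDiag_mul (S T : Module.End ℂ NCV) : ncDiag (S * T) = ncDiag S * ncDiag T :=
  map_mul ncDiagAlgHom S T

theorem ncDiag_sub (S T : Module.End ℂ NCV) : ncDiag (S - T) = ncDiag S - ncDiag T :=
  map_sub ncDiagAlgHom S T

theorem ncDiag_smul (c : ℂ) (T : Module.End ℂ NCV) : ncDiag (c • T) = c • ncDiag T :=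
  map_smul ncDiagAlgHom c T

theorem ncDiag_one : ncDiag (1 : Module.End ℂ NCV) = 1 :=
  map_one ncDiagAlgHom

theorem Commute.ncDiag {S T : Module.End ℂ NCV} (h : Commute S T) :
    Commute (ncDiag S) (ncDiag T) :=
  h.map ncDiagAlgHom

theorem commute_ncSigma_ncDiag (j : Fin 2) (T : Module.End ℂ NCV) :
    Commute (ncSigma j) (ncDiag T) := by
  refine LinearMap.ext fun x => ?_
  by_cases h : j = 0 <;> simp [ncSigma, ncDiag, h]

def ncCoord (μ : Fin 2) (q : ℤ × ℤ) : ℂ := if μ = 0 then (q.1 : ℂ) else (q.2 : ℂ)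

theorem ncDer_mul_wA_sub_wA_mul_ncDer (θ : ℝ) (μ : Fin 2) (g : ℤ × ℤ) :
    ncDer μ * wA θ g - wA θ g * ncDer μ = ncCoord μ g • wA θ g := by
  ext f q
  by_cases h : μ = 0 <;>
  · simp [ncDer, wA, ncCoord, h]
    ring

theorem wA_neg_mul_wA (θ : ℝ) (g : ℤ × ℤ) :
    wA θ (-g) * wA θ g = Complex.exp (-(2 * Real.pi * I * θ * g.1 * g.2)) • 1 := by
  ext f q
  simp only [wA, Module.End.mul_apply, LinearMap.coe_mk, AddHom.coe_mk, LinearMap.smul_apply,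
    Module.End.one_apply, Pi.smul_apply, smul_eq_mul, Prod.fst_neg, Prod.snd_neg, sub_neg_eq_add,
    add_sub_cancel_right, Int.cast_add, Int.cast_neg, ← mul_assoc, ← Complex.exp_add]
  congr 2
  ring

theorem commutator_diracTerm {A : Type*} [Ring A] [Algebra ℂ A] {s e d w : A} {c : ℂ}
    (hs : Commute s w) (he : Commute e w) (hd : d * w - w * d = c • w) :
    (s * (e * d) + (1 / 2 : ℂ) • (s * (d * e - e * d))) * w
      - w * (s * (e * d) + (1 / 2 : ℂ) • (s * (d * e - e * d))) = c • (w * (s * e)) := by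
  have hd' : d * w = w * d + c • w := by rw [← hd]; abel
  have hdw : ∀ x, d * (w * x) = w * (d * x) + c • (w * x) := fun x => by
    rw [← mul_assoc, hd', add_mul, smul_mul_assoc, mul_assoc]
  simp only [add_mul, sub_mul, mul_add, mul_sub, mul_assoc, smul_mul_assoc, mul_smul_comm,
    he.eq, hs.left_comm, he.left_comm, hd', hdw, smul_add, smul_sub]
  module

theorem commutator_ncDirac_ncDiag_wA (θ : ℝ) (E : Fin 2 → Fin 2 → Module.End ℂ NCV)
    (g : ℤ × ℤ) (hE : ∀ j μ, Commute (E j μ) (wA θ g)) :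
    ncDirac E * ncDiag (wA θ g) - ncDiag (wA θ g) * ncDirac E =
      ∑ j, ∑ μ, ncCoord μ g • (ncDiag (wA θ g) * (ncSigma j * ncDiag (E j μ))) := by
  simp only [ncDirac, Finset.sum_mul, Finset.mul_sum, ← Finset.sum_sub_distrib]
  refine Finset.sum_congr rfl fun j _ => Finset.sum_congr rfl fun μ _ => ?_
  rw [ncDiag_mul, ncDiag_sub, ncDiag_mul, ncDiag_mul]
  exact commutator_diracTerm (commute_ncSigma_ncDiag j _) (hE j μ).ncDiag
    (by rw [← ncDiag_mul, ← ncDiag_mul, ← ncDiag_sub, ncDer_mul_wA_sub_wA_mul_ncDer,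
      ncDiag_smul])

theorem ncDiag_wA_neg_mul_commutator_ncDirac (θ : ℝ) (E : Fin 2 → Fin 2 → Module.End ℂ NCV)
    (g : ℤ × ℤ) (hE : ∀ j μ, Commute (E j μ) (wA θ g)) :
    ncDiag (wA θ (-g)) * (ncDirac E * ncDiag (wA θ g) - ncDiag (wA θ g) * ncDirac E) =
      Complex.exp (-(2 * Real.pi * I * θ * g.1 * g.2)) •
        ∑ j, ∑ μ, ncCoord μ g • (ncSigma j * ncDiag (E j μ)) := by
  have hscalar : ncDiag (wA θ (-g)) * ncDiag (wA θ g) =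
      Complex.exp (-(2 * Real.pi * I * θ * g.1 * g.2)) • 1 := by
    rw [← ncDiag_mul, wA_neg_mul_wA, ncDiag_smul, ncDiag_one]
  simp only [commutator_ncDirac_ncDiag_wA θ E g hE, Finset.mul_sum, Finset.smul_sum,
    mul_smul_comm, ← mul_assoc, hscalar, smul_mul_assoc, one_mul, smul_comm (Complex.exp _)]

theorem commute_ncDiag_ncRep_ncSigma_mul_ncDiag (θ : ℝ) (α : (ℤ × ℤ) →₀ ℂ) (j : Fin 2)
    {T : Module.End ℂ NCV} (hT : ∀ p, Commute T (wA θ p)) :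
    Commute (ncDiag (ncRep θ α)) (ncSigma j * ncDiag T) := by
  have hrep : Commute (ncRep θ α) T :=
    Commute.sum_left _ _ _ fun p _ => (hT p).symm.smul_left _
  exact (commute_ncSigma_ncDiag j _).symm.mul_right hrep.ncDiag

theorem stmt8 (θ : ℝ) (E : Fin 2 → Fin 2 → Module.End ℂ NCV)
    -- e_j^μ belong to the commutant J A_θ J* of A_θ
    (hE : ∀ j μ p, Commute (E j μ) (wA θ p)) :
    ∀ (i : Fin 2) (α : (ℤ × ℤ) →₀ ℂ),
      Commute (ncDiag (ncRep θ α)) (ncOmega θ E i) := by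
  intro i α
  rw [ncOmega, ncDiag_wA_neg_mul_commutator_ncDirac θ E _ fun j μ => hE j μ _]
  exact (Commute.sum_right _ _ _ fun j _ => Commute.sum_right _ _ _ fun μ _ =>
    (commute_ncDiag_ncRep_ncSigma_mul_ncDiag θ α j (hE j μ)).smul_right _).smul_right _

end
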